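/- arXiv:2309.14128 — 2 statements merged into one kernel-verified Lean document; each statement's English description precedes it below -/
import Mathlib

section
/- Let A = {H₁,…,Hₙ} be a toric hyperplane arrangement on Tⁿ consisting of exactly n hyperplanes Hᵢ = θ_{aᵢ}⁻¹(bᵢ), and let Θ be the n × n integer matrix whose i-th row is aᵢ; assume det Θ ≠ 0. Then for every 0 ≤ k ≤ n, the number of k-flats of A is f_k(A) = |det Θ| · C(n,k), where C(n,k) is the binomial coefficient. -/
/-!
The homomorphism `Θ : Tⁿ → Tⁿ`, `x ↦ (θ_{aᵢ}(x))ᵢ`, is onto and its kernel `Θ⁻¹ℤⁿ/ℤⁿ ≅ ℤⁿ/Θℤⁿ`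
has `|det Θ|` elements. As there are exactly `n` hyperplanes, the `k`-flats are the connected
components of the strata `{x | θ_{aᵢ}(x) = bᵢ ↔ i ∈ S}` with `|S| = n - k`. Such a stratum is the
`Θ`-preimage of an open face of the cube `[0, 1)ⁿ`, a convex set, so it is the disjoint union of
the `|ker Θ|` translates of one connected lift of that face; a label map, continuous on the
stratum with values in the finite set `ker Θ`, tells the translates apart.
-/

open Set

/-- The `n`-torus `ℝⁿ/ℤⁿ`, modelled as a product of circles `ℝ/ℤ`. -/
abbrev Torus (n : ℕ) := Fin n → AddCircle (1 : ℝ)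

/-- The group homomorphism `Tⁿ → ℝ/ℤ` induced by `x ↦ a₁x₁ + ⋯ + aₙxₙ`. -/
noncomputable def theta {n : ℕ} (a : Fin n → ℤ) (x : Torus n) : AddCircle (1 : ℝ) :=
  ∑ i, a i • x i

/-- The affine toric hyperplane with normal vector `a` and intercept `c`. -/
def Hyp {n : ℕ} (a : Fin n → ℤ) (c : AddCircle (1 : ℝ)) : Set (Torus n) :=
  {x | theta a x = c}

/-- The set of connected components of a subset `A` of a topological space. -/
def comps {X : Type*} [TopologicalSpace X] (A : Set X) : Set (Set X) :=
  {C | ∃ x ∈ A, C = connectedComponentIn A x}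

/-- The set `Σ_k` of `k`-flats of an arrangement of hypersurfaces `K i` inside an
ambient space `W` of dimension `d`: `Σ_0` is the set of connected components of the
union over `d`-element index sets `S` of `⋂_{i ∈ S} K i`; for `0 < k < d`, `Σ_k` is the
union over `(d-k)`-element index sets `S` of the sets of connected components of
`⋂_{i ∈ S} K i` minus all lower-dimensional flats; and `Σ_d` is the set of connected
components of the complement `W \ ⋃ᵢ K i`. -/
noncomputable def SigIn {X : Type*} [TopologicalSpace X] {ι : Type*} [Fintype ι]
    (W : Set X) (d : ℕ) (K : ι → Set X) : ℕ → Set (Set X) := fun k =>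
  Nat.strongRecOn k (fun k ih =>
    if k = 0 then comps (⋃ S ∈ {S : Finset ι | S.card = d}, ⋂ i ∈ S, K i)
    else if k = d then comps (W \ ⋃ i, K i)
    else ⋃ S ∈ {S : Finset ι | S.card = d - k},
      comps ((⋂ i ∈ S, K i) \ ⋃ j : Fin k, ⋃ σ ∈ ih j j.isLt, σ))

lemma SigIn_eq {X : Type*} [TopologicalSpace X] {ι : Type*} [Fintype ι]
    (W : Set X) (d : ℕ) (K : ι → Set X) (k : ℕ) :
    SigIn W d K k =
      if k = 0 then comps (⋃ S ∈ {S : Finset ι | S.card = d}, ⋂ i ∈ S, K i)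
      else if k = d then comps (W \ ⋃ i, K i)
      else ⋃ S ∈ {S : Finset ι | S.card = d - k},
        comps ((⋂ i ∈ S, K i) \ ⋃ j : Fin k, ⋃ σ ∈ SigIn W d K j, σ) := by
  unfold SigIn Nat.strongRecOn
  rw [WellFounded.fix_eq]

lemma sUnion_comps {X : Type*} [TopologicalSpace X] (A : Set X) : ⋃₀ comps A = A := by
  ext x
  simp only [mem_sUnion, comps, mem_ofPred_eq]
  constructor
  · rintro ⟨_, ⟨y, -, rfl⟩, hx⟩
    exact connectedComponentIn_subset _ _ hx
  · exact fun hx => ⟨_, ⟨x, hx, rfl⟩, mem_connectedComponentIn hx⟩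

section Strata

variable {X ι : Type*} [Fintype ι] (K : ι → Set X)

open Classical in
noncomputable def incidence (x : X) : Finset ι := {i | x ∈ K i}

def stratum (S : Finset ι) : Set X := {x | incidence K x = S}

variable {K}

lemma mem_incidence {x : X} {i : ι} : i ∈ incidence K x ↔ x ∈ K i := by
  simp [incidence]

lemma mem_stratum {S : Finset ι} {x : X} : x ∈ stratum K S ↔ ∀ i, i ∈ S ↔ x ∈ K i := by
  simp only [stratum, mem_ofPred_eq, Finset.ext_iff, mem_incidence, iff_comm]

lemma stratum_univ : stratum K Finset.univ = ⋂ i, K i := by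
  ext x
  simp [mem_stratum]

lemma stratum_empty : stratum K ∅ = (⋃ i, K i)ᶜ := by
  ext x
  simp [mem_stratum]

lemma iInter_diff_eq_stratum {S : Finset ι} {m : ℕ} (hS : S.card = m) :
    (⋂ i ∈ S, K i) \ {x | m < (incidence K x).card} = stratum K S := by
  ext x
  simp only [mem_sdiff, mem_iInter, mem_ofPred_eq, not_lt, stratum]
  constructor
  · rintro ⟨hx, hcard⟩
    exact (Finset.eq_of_subset_of_card_le (fun i hi => mem_incidence.2 (hx i hi))
      (hS ▸ hcard)).symm
  · rintro rfl
    exact ⟨fun i => mem_incidence.1, hS.le⟩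

lemma ncard_setOf_card_eq (m : ℕ) :
    {S : Finset ι | S.card = m}.ncard = (Fintype.card ι).choose m := by
  classical
  rw [← Finset.card_univ, ← Finset.card_powersetCard, ← ncard_coe_finset]
  congr 1
  ext S
  simp

lemma injOn_stratum_inter_fiber {Y : Type*} {f : X → Y} {P : Set (Finset ι)} {T : Set Y}
    (hne : ∀ S ∈ P, ∀ y ∈ T, (stratum K S ∩ f ⁻¹' {y}).Nonempty) :
    InjOn (Function.uncurry fun S y => stratum K S ∩ f ⁻¹' {y}) (P ×ˢ T) := by
  rintro ⟨S, y⟩ ⟨hS, hy⟩ ⟨S', y'⟩ - hfib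
  simp only [Function.uncurry_apply_pair] at hfib
  obtain ⟨x, hxS, hxy⟩ := hne S hS y hy
  obtain ⟨hxS', hxy'⟩ : x ∈ stratum K S' ∩ f ⁻¹' {y'} := hfib ▸ ⟨hxS, hxy⟩
  exact Prod.ext (hxS.symm.trans hxS') (hxy.symm.trans hxy')

variable [TopologicalSpace X]

lemma sUnion_iUnion_comps_stratum (m : ℕ) :
    ⋃₀ ⋃ S ∈ {S : Finset ι | S.card = m}, comps (stratum K S) =
      {x | (incidence K x).card = m} := by
  ext x
  simp only [sUnion_iUnion, sUnion_comps, mem_iUnion, stratum, mem_ofPred_eq]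
  exact ⟨fun ⟨S, hS, hx⟩ => hx ▸ hS, fun hx => ⟨_, hx, rfl⟩⟩

theorem SigIn_univ_eq_iUnion_comps_stratum {d : ℕ} (hd : Fintype.card ι = d) :
    ∀ k ≤ d, SigIn univ d K k = ⋃ S ∈ {S : Finset ι | S.card = d - k}, comps (stratum K S) := by
  subst hd
  intro k
  induction k using Nat.strong_induction_on with
  | _ k ih =>
  intro hk
  rw [SigIn_eq]
  split_ifs with hk0 hkd
  · have : {S : Finset ι | S.card = Fintype.card ι} = {Finset.univ} := by
      ext S
      simp [Finset.card_eq_iff_eq_univ]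
    simp [hk0, this, stratum_univ]
  · have : {S : Finset ι | S.card = Fintype.card ι - k} = {∅} := by
      ext S
      simp [hkd]
    simp [this, stratum_empty, compl_eq_univ_sdiff]
  · have hlower : ⋃ j : Fin k, ⋃ σ ∈ SigIn univ (Fintype.card ι) K j, σ =
        {x | Fintype.card ι - k < (incidence K x).card} := by
      have hflats (j : Fin k) : ⋃ σ ∈ SigIn univ (Fintype.card ι) K j, σ =
          {x | (incidence K x).card = Fintype.card ι - j} := by
        rw [← sUnion_eq_biUnion, ih j j.2 (by omega), sUnion_iUnion_comps_stratum]
      ext x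
      have hx : (incidence K x).card ≤ Fintype.card ι := Finset.card_le_univ _
      simp only [mem_iUnion, hflats, mem_ofPred_eq]
      exact ⟨fun ⟨j, hj⟩ => by omega,
        fun h => ⟨⟨Fintype.card ι - (incidence K x).card, by omega⟩, by simp only; omega⟩⟩
    refine iUnion₂_congr fun S hS => ?_
    rw [hlower, iInter_diff_eq_stratum hS]

end Strata

section Components

variable {X Y : Type*} [TopologicalSpace X] [TopologicalSpace Y] {A : Set X} {T : Set Y}
  {f : X → Y}

lemma connectedComponentIn_eq_inter_preimage (hT : IsDiscrete T) (hf : ContinuousOn f A)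
    (hfT : MapsTo f A T) (hfib : ∀ y ∈ T, IsPreconnected (A ∩ f ⁻¹' {y})) {x : X}
    (hx : x ∈ A) : connectedComponentIn A x = A ∩ f ⁻¹' {f x} := by
  have hCA : connectedComponentIn A x ⊆ A := connectedComponentIn_subset _ _
  refine Subset.antisymm (fun z hz => ⟨hCA hz, ?_⟩) ?_
  · exact isPreconnected_connectedComponentIn.constant_of_mapsTo hT (hf.mono hCA)
      (hfT.mono_left hCA) hz (mem_connectedComponentIn hx)
  · exact (hfib _ (hfT hx)).subset_connectedComponentIn ⟨hx, rfl⟩ inter_subset_left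

lemma comps_eq_image_inter_preimage (hT : IsDiscrete T) (hf : ContinuousOn f A)
    (hfT : MapsTo f A T) (hsurj : SurjOn f A T)
    (hfib : ∀ y ∈ T, IsPreconnected (A ∩ f ⁻¹' {y})) :
    comps A = (fun y => A ∩ f ⁻¹' {y}) '' T := by
  ext C
  constructor
  · rintro ⟨x, hx, rfl⟩
    exact ⟨f x, hfT hx, (connectedComponentIn_eq_inter_preimage hT hf hfT hfib hx).symm⟩
  · rintro ⟨y, hy, rfl⟩
    obtain ⟨x, hx, rfl⟩ := hsurj hy
    exact ⟨x, hx, (connectedComponentIn_eq_inter_preimage hT hf hfT hfib hx).symm⟩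

end Components

theorem card_SigIn_of_labelling {X Y ι : Type*} [TopologicalSpace X] [TopologicalSpace Y]
    [T1Space Y] [Fintype ι] {K : ι → Set X} {d : ℕ} (hd : Fintype.card ι = d) {f : X → Y}
    {T : Set Y} (hT : T.Finite) (hf : ∀ S, ContinuousOn f (stratum K S)) (hfT : MapsTo f univ T)
    (hsurj : ∀ S, SurjOn f (stratum K S) T)
    (hfib : ∀ S, ∀ y ∈ T, IsPreconnected (stratum K S ∩ f ⁻¹' {y})) {k : ℕ} (hk : k ≤ d) :
    Nat.card (SigIn univ d K k) = T.ncard * d.choose k := by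
  have hcomps (S : Finset ι) : comps (stratum K S) = (fun y => stratum K S ∩ f ⁻¹' {y}) '' T :=
    comps_eq_image_inter_preimage hT.isDiscrete (hf S) (hfT.mono_left (subset_univ _))
      (hsurj S) (hfib S)
  have hinj := injOn_stratum_inter_fiber (f := f) (P := {S : Finset ι | S.card = d - k})
    (T := T) fun S _ y hy => (hsurj S hy).imp fun x ⟨hx, hxy⟩ => ⟨hx, hxy⟩
  rw [SigIn_univ_eq_iUnion_comps_stratum hd k hk]
  simp_rw [hcomps, iUnion_image_left, ← image_uncurry_prod]
  rw [Nat.card_coe_set_eq, hinj.ncard_image, ncard_prod, ncard_setOf_card_eq, hd,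
    Nat.choose_symm hk, mul_comm]

namespace Matrix

variable {ι R : Type*} [Fintype ι] [DecidableEq ι] [CommRing R] [IsDomain R]

lemma toLin'_injective_of_det_ne_zero {M : Matrix ι ι R} (hdet : M.det ≠ 0) :
    Function.Injective M.toLin' := by
  rw [← LinearMap.ker_eq_bot, LinearMap.ker_eq_bot']
  intro v hv
  by_contra hv0
  exact hdet (exists_mulVec_eq_zero_iff.1 ⟨v, hv0, hv⟩)

lemma natAbs_det_eq_card_quotient_range {M : Matrix ι ι ℤ} (hdet : M.det ≠ 0) :
    M.det.natAbs = Nat.card ((ι → ℤ) ⧸ LinearMap.range M.toLin') := by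
  rw [← Submodule.natAbs_det_equiv _
    (LinearEquiv.ofInjective _ (toLin'_injective_of_det_ne_zero hdet)), ← LinearMap.det_toLin' M]
  rfl

end Matrix

namespace Torus

open Matrix

variable {n : ℕ}

noncomputable def mk : (Fin n → ℝ) →+ Torus n :=
  (QuotientAddGroup.mk' (AddSubgroup.zmultiples (1 : ℝ))).compLeft (Fin n)

@[simp]
lemma mk_apply (v : Fin n → ℝ) (i : Fin n) : mk v i = (v i : AddCircle (1 : ℝ)) := rfl

lemma continuous_mk : Continuous (mk (n := n)) :=
  continuous_pi fun i => (AddCircle.continuous_mk' 1).comp (continuous_apply i)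

lemma mk_eq_zero_iff {v : Fin n → ℝ} : mk v = 0 ↔ ∃ u : Fin n → ℤ, (↑) ∘ u = v := by
  simp only [funext_iff, mk_apply, Pi.zero_apply, AddCircle.coe_eq_zero_iff, zsmul_eq_mul,
    mul_one, Function.comp_apply]
  exact ⟨fun h => ⟨fun i => (h i).choose, fun i => (h i).choose_spec⟩,
    fun ⟨u, hu⟩ i => ⟨u i, hu i⟩⟩

noncomputable def frac (y : Torus n) : Fin n → ℝ := fun i => AddCircle.equivIco 1 0 (y i)

@[simp]
lemma mk_frac (y : Torus n) : mk (frac y) = y :=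
  funext fun _ => AddCircle.coe_equivIco

lemma frac_mem_Ico (y : Torus n) (i : Fin n) : frac y i ∈ Ico 0 1 := by
  simpa [frac] using (AddCircle.equivIco 1 0 (y i)).2

lemma frac_mk {v : Fin n → ℝ} (hv : ∀ i, v i ∈ Ico 0 1) : frac (mk v) = v :=
  funext fun i => AddCircle.equivIco_coe_of_mem (by simpa using hv i)

lemma frac_eq_zero_iff {y : Torus n} {i : Fin n} : frac y i = 0 ↔ y i = 0 := by
  constructor
  · intro h
    rw [← congrFun (mk_frac y) i, mk_apply, h, QuotientAddGroup.mk_zero]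
  · intro h
    simpa [frac, h] using AddCircle.equivIco_coe_of_mem (p := (1 : ℝ)) (a := 0) (y := 0)
      (by simp)

lemma continuousAt_frac_apply {y : Torus n} {i : Fin n} (hy : y i ≠ 0) :
    ContinuousAt (fun z => frac z i) y :=
  continuous_subtype_val.continuousAt.comp
    (ContinuousAt.comp (f := fun z : Torus n => z i) (AddCircle.continuousAt_equivIco 1 0 hy)
      (continuous_apply i).continuousAt)

variable (M : Matrix (Fin n) (Fin n) ℤ)

noncomputable def thetaHom : Torus n →+ Torus n where
  toFun x i := theta (M i) x
  map_zero' := by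
    funext i
    simp [theta]
  map_add' x y := by
    funext i
    simp [theta, smul_add, Finset.sum_add_distrib]

@[simp]
lemma thetaHom_apply (x : Torus n) (i : Fin n) : thetaHom M x i = theta (M i) x := rfl

lemma continuous_thetaHom : Continuous (thetaHom M) :=
  continuous_pi fun i => by
    simp only [thetaHom_apply, theta]
    fun_prop

lemma thetaHom_mk (v : Fin n → ℝ) :
    thetaHom M (mk v) = mk (M.map ((↑) : ℤ → ℝ) *ᵥ v) := by
  funext i
  simp only [thetaHom_apply, theta, mk_apply, mulVec, dotProduct, map_apply]
  push_cast [← AddCircle.coe_zsmul, ← zsmul_eq_mul]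
  exact (map_sum (QuotientAddGroup.mk' (AddSubgroup.zmultiples (1 : ℝ))) _ _).symm

variable {M}

lemma mulVec_inv_mulVec (hdet : M.det ≠ 0) (v : Fin n → ℝ) :
    M.map ((↑) : ℤ → ℝ) *ᵥ ((M.map (↑))⁻¹ *ᵥ v) = v := by
  rw [mulVec_mulVec, mul_nonsing_inv _ (by simpa [← Int.cast_det]), one_mulVec]

lemma inv_mulVec_mulVec (hdet : M.det ≠ 0) (v : Fin n → ℝ) :
    (M.map ((↑) : ℤ → ℝ))⁻¹ *ᵥ (M.map (↑) *ᵥ v) = v := by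
  rw [mulVec_mulVec, nonsing_inv_mul _ (by simpa [← Int.cast_det]), one_mulVec]

variable (M) in
noncomputable def mkInv : (Fin n → ℝ) →+ Torus n :=
  mk.comp (M.map ((↑) : ℤ → ℝ))⁻¹.mulVecLin.toAddMonoidHom

lemma mkInv_apply (v : Fin n → ℝ) : mkInv M v = mk ((M.map (↑))⁻¹ *ᵥ v) := rfl

lemma continuous_mkInv : Continuous (mkInv M) :=
  continuous_mk.comp (Continuous.matrix_mulVec continuous_const continuous_id)

lemma thetaHom_mkInv (hdet : M.det ≠ 0) (v : Fin n → ℝ) : thetaHom M (mkInv M v) = mk v := by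
  rw [mkInv_apply, thetaHom_mk, mulVec_inv_mulVec hdet]

lemma range_mkInv_comp_intCast (hdet : M.det ≠ 0) :
    ((mkInv M).comp ((Int.castAddHom ℝ).compLeft (Fin n))).range = (thetaHom M).ker := by
  ext x
  simp only [AddMonoidHom.mem_range, AddMonoidHom.mem_ker, AddMonoidHom.comp_apply]
  constructor
  · rintro ⟨u, rfl⟩
    rw [thetaHom_mkInv hdet, mk_eq_zero_iff]
    exact ⟨u, rfl⟩
  · intro hx
    obtain ⟨v, rfl⟩ : ∃ v, mk v = x := ⟨frac x, mk_frac x⟩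
    obtain ⟨u, hu⟩ := mk_eq_zero_iff.1 ((thetaHom_mk M v).symm.trans hx)
    refine ⟨u, ?_⟩
    change mk (_ *ᵥ ((↑) ∘ u)) = mk v
    rw [hu, inv_mulVec_mulVec hdet]

lemma ker_mkInv_comp_intCast (hdet : M.det ≠ 0) :
    ((mkInv M).comp ((Int.castAddHom ℝ).compLeft (Fin n))).ker =
      (LinearMap.range M.toLin').toAddSubgroup := by
  ext u
  simp only [AddMonoidHom.mem_ker, AddMonoidHom.comp_apply, mkInv_apply, mk_eq_zero_iff,
    Submodule.mem_toAddSubgroup, LinearMap.mem_range, toLin'_apply]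
  have hcast (w : Fin n → ℤ) :
      M.map (Int.cast : ℤ → ℝ) *ᵥ (Int.cast ∘ w) = Int.cast ∘ (M *ᵥ w) :=
    funext fun i => (RingHom.map_mulVec (Int.castRingHom ℝ) M w i).symm
  refine exists_congr fun w => ?_
  change _ = _ *ᵥ (Int.cast ∘ u : Fin n → ℝ) ↔ _
  constructor
  · intro h
    refine (Int.cast_injective (α := ℝ)).comp_left ?_
    simp only [← hcast, h, mulVec_inv_mulVec hdet]
  · rintro rfl
    rw [← hcast, inv_mulVec_mulVec hdet]

theorem card_ker_thetaHom (hdet : M.det ≠ 0) : Nat.card (thetaHom M).ker = M.det.natAbs := by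
  rw [← range_mkInv_comp_intCast hdet,
    ← Nat.card_congr (QuotientAddGroup.quotientKerEquivRange _).toEquiv,
    ker_mkInv_comp_intCast hdet, natAbs_det_eq_card_quotient_range hdet]
  rfl

variable (M) in
def arrangement (b : Torus n) (i : Fin n) : Set (Torus n) := Hyp (M i) (b i)

variable (M) in
/-- `x` is the translate by `label M b x ∈ ker Θ` of a point that depends only on `Θ x`. -/
noncomputable def label (b x : Torus n) : Torus n :=
  x - mkInv M (frac b) - mkInv M (frac (thetaHom M x - b))

def cubeFace (S : Finset (Fin n)) : Set (Fin n → ℝ) :=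
  univ.pi fun j => if j ∈ S then {0} else Ioo 0 1

lemma convex_cubeFace (S : Finset (Fin n)) : Convex ℝ (cubeFace S) :=
  convex_pi fun j _ => by
    split_ifs
    exacts [convex_singleton 0, convex_Ioo 0 1]

lemma nonempty_cubeFace (S : Finset (Fin n)) : (cubeFace S).Nonempty :=
  ⟨fun j => if j ∈ S then 0 else 1 / 2, fun j _ => by dsimp only; split_ifs <;> norm_num⟩

lemma mem_cubeFace_iff {S : Finset (Fin n)} {t : Fin n → ℝ} (ht : ∀ j, t j ∈ Ico 0 1) :
    t ∈ cubeFace S ↔ ∀ j, j ∈ S ↔ t j = 0 := by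
  refine forall_congr' fun j => ?_
  have := ht j
  by_cases hj : j ∈ S
  · simp [hj]
  · simp only [mem_univ, hj, if_false, forall_const, mem_Ioo, false_iff]
    exact ⟨fun h => h.1.ne', fun h => ⟨this.1.lt_of_ne' h, this.2⟩⟩

lemma mem_Ico_of_mem_cubeFace {S : Finset (Fin n)} {t : Fin n → ℝ} (ht : t ∈ cubeFace S)
    (j : Fin n) : t j ∈ Ico 0 1 := by
  have := ht j (mem_univ j)
  dsimp only at this
  split_ifs at this
  exacts [by simp_all, Ioo_subset_Ico_self this]

variable {b : Torus n}

lemma mem_stratum_iff_frac_mem_cubeFace {S : Finset (Fin n)} {x : Torus n} :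
    x ∈ stratum (arrangement M b) S ↔ frac (thetaHom M x - b) ∈ cubeFace S := by
  rw [mem_cubeFace_iff (frac_mem_Ico _), mem_stratum]
  refine forall_congr' fun j => ?_
  rw [frac_eq_zero_iff, Pi.sub_apply, sub_eq_zero]
  rfl

lemma thetaHom_label (hdet : M.det ≠ 0) (x : Torus n) : thetaHom M (label M b x) = 0 := by
  simp only [label, map_sub, thetaHom_mkInv hdet, mk_frac]
  abel

lemma continuousOn_label (S : Finset (Fin n)) :
    ContinuousOn (label M b) (stratum (arrangement M b) S) := by
  refine (continuousOn_id.sub continuousOn_const).sub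
    (continuous_mkInv.comp_continuousOn (continuousOn_pi.2 fun j x hx => ?_))
  have hzero : ∀ z ∈ stratum (arrangement M b) S, frac (thetaHom M z - b) j = 0 ↔ j ∈ S :=
    fun z hz =>
      ((mem_cubeFace_iff (frac_mem_Ico _)).1 (mem_stratum_iff_frac_mem_cubeFace.1 hz) j).symm
  by_cases hj : j ∈ S
  · exact continuousWithinAt_const.congr (fun z hz => (hzero z hz).2 hj) ((hzero x hx).2 hj)
  · have hne : (thetaHom M x - b) j ≠ 0 := fun h => hj ((hzero x hx).1 (frac_eq_zero_iff.2 h))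
    exact (ContinuousAt.comp (f := fun z => thetaHom M z - b) (continuousAt_frac_apply hne)
      ((continuous_thetaHom M).sub continuous_const).continuousAt).continuousWithinAt

lemma stratum_inter_label_preimage_eq_image (hdet : M.det ≠ 0) {κ : Torus n}
    (hκ : κ ∈ (thetaHom M).ker) (S : Finset (Fin n)) :
    stratum (arrangement M b) S ∩ label M b ⁻¹' {κ} =
      (fun t => mkInv M (frac b) + κ + mkInv M t) '' cubeFace S := by
  ext x
  constructor
  · rintro ⟨hx, rfl⟩
    refine ⟨_, mem_stratum_iff_frac_mem_cubeFace.1 hx, ?_⟩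
    simp only [label]
    abel
  · rintro ⟨t, ht, rfl⟩
    have hIco := mem_Ico_of_mem_cubeFace ht
    have hθ : thetaHom M (mkInv M (frac b) + κ + mkInv M t) - b = mk t := by
      rw [map_add, map_add, thetaHom_mkInv hdet, thetaHom_mkInv hdet, mk_frac,
        AddMonoidHom.mem_ker.1 hκ, add_zero, add_sub_cancel_left]
    refine ⟨mem_stratum_iff_frac_mem_cubeFace.2 (by rwa [hθ, frac_mk hIco]), ?_⟩
    simp only [mem_preimage, mem_singleton_iff, label, hθ, frac_mk hIco]
    abel

lemma isPreconnected_stratum_inter_label_preimage (hdet : M.det ≠ 0) {κ : Torus n}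
    (hκ : κ ∈ (thetaHom M).ker) (S : Finset (Fin n)) :
    IsPreconnected (stratum (arrangement M b) S ∩ label M b ⁻¹' {κ}) := by
  rw [stratum_inter_label_preimage_eq_image hdet hκ]
  exact (convex_cubeFace S).isPreconnected.image _
    (continuous_const.add continuous_mkInv).continuousOn

lemma surjOn_label (hdet : M.det ≠ 0) (S : Finset (Fin n)) :
    SurjOn (label M b) (stratum (arrangement M b) S) (thetaHom M).ker := fun κ hκ => by
  have := (nonempty_cubeFace S).image (fun t => mkInv M (frac b) + κ + mkInv M t)
  rwa [← stratum_inter_label_preimage_eq_image hdet hκ] at this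

end Torus

/-- For an arrangement of exactly `n` toric hyperplanes on `Tⁿ` whose system of normal
vectors `Θ` has nonzero determinant, the number of `k`-flats is `|det Θ| * C(n,k)`. -/
theorem card_flats_of_n_hyperplanes {n : ℕ}
    (a : Fin n → Fin n → ℤ) (b : Fin n → AddCircle (1 : ℝ))
    (hdet : (Matrix.of a).det ≠ 0) :
    ∀ k ≤ n,
      Nat.card ↥(SigIn Set.univ n (fun i => Hyp (a i) (b i)) k) =
        (Matrix.of a).det.natAbs * n.choose k := by
  intro k hk
  have hker : Nat.card (Torus.thetaHom (Matrix.of a)).ker = (Matrix.of a).det.natAbs :=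
    Torus.card_ker_thetaHom hdet
  have hfin : ((Torus.thetaHom (Matrix.of a)).ker : Set (Torus n)).Finite :=
    Nat.finite_of_card_ne_zero (hker ▸ Int.natAbs_ne_zero.2 hdet)
  rw [← hker]
  exact card_SigIn_of_labelling (K := Torus.arrangement (Matrix.of a) b) (Fintype.card_fin n) hfin
    Torus.continuousOn_label (fun x _ => Torus.thetaHom_label hdet x) (Torus.surjOn_label hdet)
    (fun S _ hκ => Torus.isPreconnected_stratum_inter_label_preimage hdet hκ S) hk
end

section
/- Let a ∈ ℤⁿ be an integer vector with gcd(a₁,…,aₙ) = 1, and let b₁,…,b_m ∈ ℝ/ℤ be m ≥ 1 pairwise distinct intercepts. Consider the arrangement of m pairwise parallel simple hyperplanes Hᵢ = θ_a⁻¹(bᵢ) on Tⁿ. Then the complement Tⁿ \ (H₁ ∪ ⋯ ∪ H_m) has exactly m connected components. -/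
/-!
By Bézout there is `u ∈ ℤⁿ` with `a ⬝ᵥ u = 1`. Every lift `v ∈ ℝⁿ` of a point of `θ_a⁻¹(I mod ℤ)`
can be shifted by an integer multiple of `u` so that `a ⬝ᵥ v ∈ I`; hence for an interval `I` this
preimage is the image of the convex slab `{v | a ⬝ᵥ v ∈ I}` and is connected. The `m` distinct
points `bᵢ` cut the circle into `m` disjoint open arcs, so the complement of the hyperplanes is the
disjoint union of `m` open connected sets, which are then exactly its connected components.
-/

open Set

open Function

theorem StrictMono.pairwise_disjoint_Ioo_castSucc_succ {α : Type*} [LinearOrder α] {m : ℕ}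
    {T : Fin (m + 1) → α} (hT : StrictMono T) :
    Pairwise (Disjoint on fun i : Fin m => Ioo (T i.castSucc) (T i.succ)) := by
  intro i j hij
  wlog h : i < j generalizing i j
  · exact (this hij.symm (hij.lt_or_gt.resolve_left h)).symm
  refine Set.disjoint_left.2 fun x hxi hxj => ?_
  exact (hxi.2.trans_le (hT.monotone (Fin.succ_le_castSucc_iff.2 h))).not_gt hxj.1

theorem StrictMono.iUnion_Ioo_castSucc_succ {α : Type*} [LinearOrder α] {m : ℕ}
    {T : Fin (m + 1) → α} (hT : StrictMono T) :
    ⋃ i : Fin m, Ioo (T i.castSucc) (T i.succ) = Ioo (T 0) (T (Fin.last m)) \ range T := by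
  ext x
  simp only [mem_iUnion, mem_sdiff, mem_Ioo, mem_range, not_exists]
  constructor
  · rintro ⟨i, hix, hxi⟩
    refine ⟨⟨(hT.monotone (Fin.zero_le _)).trans_lt hix,
      hxi.trans_le (hT.monotone (Fin.le_last _))⟩, fun j hj => ?_⟩
    subst hj
    rcases le_or_gt j i.castSucc with h | h
    · exact (hT.monotone h).not_gt hix
    · exact (hT.monotone (Fin.castSucc_lt_iff_succ_le.1 h)).not_gt hxi
  · rintro ⟨⟨h0, hlast⟩, hx⟩
    have hex : ∃ k, x < T k := ⟨_, hlast⟩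
    obtain ⟨k, hxk, hkmin⟩ : ∃ k, x < T k ∧ ∀ j < k, ¬x < T j :=
      ⟨Fin.find _ hex, Fin.find_spec hex, fun _ => Fin.find_min hex⟩
    obtain ⟨i, rfl⟩ := Fin.exists_succ_eq.2 fun hk : k = 0 => (hk ▸ hxk).not_gt h0
    exact ⟨i, lt_of_le_of_ne (not_lt.1 (hkmin _ Fin.castSucc_lt_succ)) (hx _), hxk⟩

theorem Finset.exists_strictMono_range_eq {α : Type*} [LinearOrder α] (S : Finset α) {k : ℕ}
    (hS : S.card = k + 1) {z w : α} (hz : z ∈ S) (hw : w ∈ S) (hzw : ∀ t ∈ S, t ∈ Set.Icc z w) :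
    ∃ T : Fin (k + 1) → α, StrictMono T ∧ T 0 = z ∧ T (Fin.last k) = w ∧ Set.range T = S := by
  set T := S.orderEmbOfFin hS
  have hrange : Set.range T = S := S.range_orderEmbOfFin hS
  obtain ⟨i, rfl⟩ : z ∈ Set.range T := hrange ▸ hz
  obtain ⟨j, rfl⟩ : w ∈ Set.range T := hrange ▸ hw
  refine ⟨T, T.strictMono, ?_, ?_, hrange⟩
  · exact le_antisymm (T.monotone (Fin.zero_le i)) (hzw _ (S.orderEmbOfFin_mem hS 0)).1
  · exact le_antisymm (hzw _ (S.orderEmbOfFin_mem hS _)).2 (T.monotone (Fin.le_last j))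

theorem AddCircle.image_coe_eq_preimage_equivIco {p : ℝ} [Fact (0 < p)] {z : ℝ} {A : Set ℝ}
    (hA : A ⊆ Ico z (z + p)) :
    ((↑) : ℝ → AddCircle p) '' A = (fun c => (equivIco p z c : ℝ)) ⁻¹' A := by
  ext c
  constructor
  · rintro ⟨t, ht, rfl⟩
    rwa [mem_preimage, equivIco_coe_of_mem (hA ht)]
  · exact fun hc => ⟨_, hc, coe_equivIco⟩

theorem AddCircle.exists_disjoint_arcs_iUnion_eq_compl {p : ℝ} [hp : Fact (0 < p)]
    (s : Finset (AddCircle p)) (hs : s.Nonempty) :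
    ∃ x y : Fin s.card → ℝ, (∀ i, x i < y i) ∧
      Pairwise (Disjoint on fun i => ((↑) : ℝ → AddCircle p) '' Ioo (x i) (y i)) ∧
      ⋃ i, ((↑) : ℝ → AddCircle p) '' Ioo (x i) (y i) = (↑s)ᶜ := by
  obtain ⟨c, hc⟩ := hs
  obtain ⟨z, rfl⟩ := QuotientAddGroup.mk_surjective c
  set L : AddCircle p → ℝ := fun c => equivIco p z c
  have hL : ∀ c, L c ∈ Ico z (z + p) := fun c => (equivIco p z c).2
  have hLinj : Injective L := Subtype.val_injective.comp (equivIco p z).injective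
  have hzp : z < z + p := lt_add_of_pos_right z hp.out
  have hLz : L z = z := equivIco_coe_of_mem (left_mem_Ico.2 hzp)
  -- `z + p` closes up the last arc, which ends at the point `↑z ∈ s`
  set S : Finset ℝ := insert (z + p) (s.image L)
  have hmemS : ∀ c, L c ∈ S ↔ c ∈ s := fun c => by
    simp [S, hLinj.eq_iff, (hL c).2.ne]
  have hS : S.card = s.card + 1 := by
    rw [Finset.card_insert_of_notMem, Finset.card_image_of_injective _ hLinj]
    simp only [Finset.mem_image, not_exists, not_and]
    exact fun c _ hc => (hL c).2.ne hc
  have hS_Icc : ∀ t ∈ S, t ∈ Icc z (z + p) := by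
    simp only [S, Finset.mem_insert, Finset.mem_image]
    rintro t (rfl | ⟨c, -, rfl⟩)
    · exact ⟨hzp.le, le_rfl⟩
    · exact Ico_subset_Icc_self (hL c)
  obtain ⟨T, hT, hT0, hTlast, hrange⟩ := S.exists_strictMono_range_eq hS
    (hLz ▸ (hmemS _).2 hc) (Finset.mem_insert_self _ _) hS_Icc
  have hunion := hT.iUnion_Ioo_castSucc_succ
  rw [hT0, hTlast, hrange] at hunion
  have hsub : ∀ i : Fin s.card, Ioo (T i.castSucc) (T i.succ) ⊆ Ico z (z + p) := fun i =>
    (subset_iUnion (fun i : Fin s.card => Ioo (T i.castSucc) (T i.succ)) i).trans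
      (hunion ▸ sdiff_subset.trans Ioo_subset_Ico_self)
  refine ⟨fun i => T i.castSucc, fun i => T i.succ, fun i => hT Fin.castSucc_lt_succ,
    fun i j hij => ?_, ?_⟩ <;> dsimp only [onFun]
  · rw [image_coe_eq_preimage_equivIco (hsub i), image_coe_eq_preimage_equivIco (hsub j)]
    exact (hT.pairwise_disjoint_Ioo_castSucc_succ hij).preimage L
  rw [iUnion_congr fun i => image_coe_eq_preimage_equivIco (hsub i), ← preimage_iUnion, hunion]
  ext c
  rw [mem_preimage, mem_sdiff, Finset.mem_coe, hmemS, mem_compl_iff, Finset.mem_coe]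
  refine ⟨And.right, fun hcs => ⟨⟨(hL c).1.lt_of_ne fun h => hcs ?_, (hL c).2⟩, hcs⟩⟩
  exact hLinj (hLz.trans h) ▸ hc

theorem connectedComponentIn_iUnion_eq {X ι : Type*} [TopologicalSpace X] {C : ι → Set X}
    (hopen : ∀ i, IsOpen (C i)) (hconn : ∀ i, IsPreconnected (C i))
    (hdisj : Pairwise (Disjoint on C)) {x : X} {i : ι} (hx : x ∈ C i) :
    connectedComponentIn (⋃ j, C j) x = C i := by
  refine subset_antisymm ?_ ((hconn i).subset_connectedComponentIn hx (subset_iUnion C i))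
  have hxU : x ∈ ⋃ j, C j := mem_iUnion.2 ⟨i, hx⟩
  refine isPreconnected_connectedComponentIn.subset_left_of_subset_union (hopen i)
    (isOpen_iUnion fun j : {j // j ≠ i} => hopen j)
    (disjoint_iUnion_right.2 fun j => hdisj j.2.symm) ?_ ⟨x, mem_connectedComponentIn hxU, hx⟩
  refine (connectedComponentIn_subset _ _).trans (iUnion_subset fun j => ?_)
  by_cases h : j = i
  · exact h ▸ subset_union_left
  · exact (subset_iUnion (fun j : {j // j ≠ i} => C j) ⟨j, h⟩).trans subset_union_right

theorem comps_iUnion_eq_range {X ι : Type*} [TopologicalSpace X] {C : ι → Set X}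
    (hopen : ∀ i, IsOpen (C i)) (hconn : ∀ i, IsConnected (C i))
    (hdisj : Pairwise (Disjoint on C)) : comps (⋃ i, C i) = range C := by
  ext S
  constructor
  · rintro ⟨x, hx, rfl⟩
    obtain ⟨i, hxi⟩ := mem_iUnion.1 hx
    exact ⟨i,
      (connectedComponentIn_iUnion_eq hopen (fun j => (hconn j).isPreconnected) hdisj hxi).symm⟩
  · rintro ⟨i, rfl⟩
    obtain ⟨x, hx⟩ := (hconn i).nonempty
    exact ⟨x, mem_iUnion.2 ⟨i, hx⟩,
      (connectedComponentIn_iUnion_eq hopen (fun j => (hconn j).isPreconnected) hdisj hx).symm⟩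

theorem card_comps_iUnion {X ι : Type*} [TopologicalSpace X] {C : ι → Set X}
    (hopen : ∀ i, IsOpen (C i)) (hconn : ∀ i, IsConnected (C i))
    (hdisj : Pairwise (Disjoint on C)) : Nat.card (comps (⋃ i, C i)) = Nat.card ι := by
  rw [comps_iUnion_eq_range hopen hconn hdisj]
  refine Nat.card_range_of_injective fun i j hij => by_contra fun hne => ?_
  obtain ⟨x, hx⟩ := (hconn i).nonempty
  exact disjoint_left.1 (hdisj hne) hx (hij ▸ hx)

theorem theta_coe {n : ℕ} (a : Fin n → ℤ) (v : Fin n → ℝ) :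
    theta a (fun i => (v i : AddCircle (1 : ℝ))) = (((↑) ∘ a : Fin n → ℝ) ⬝ᵥ v : ℝ) := by
  simp [theta, dotProduct, ← zsmul_eq_mul]

theorem continuous_theta {n : ℕ} (a : Fin n → ℤ) : Continuous (theta a) :=
  continuous_finsetSum _ fun i _ => (continuous_apply i).zsmul (a i)

theorem intCast_dotProduct_eq_one {n : ℕ} {a u : Fin n → ℤ} (hu : a ⬝ᵥ u = 1) :
    ((↑) ∘ a : Fin n → ℝ) ⬝ᵥ ((↑) ∘ u) = 1 := by
  simpa [hu] using ((Int.castRingHom ℝ).map_dotProduct a u).symm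

theorem preimage_theta_image_coe {n : ℕ} {a u : Fin n → ℤ} (hu : a ⬝ᵥ u = 1) (I : Set ℝ) :
    theta a ⁻¹' ((↑) '' I) =
      (fun v i => (v i : AddCircle (1 : ℝ))) '' {v | ((↑) ∘ a : Fin n → ℝ) ⬝ᵥ v ∈ I} := by
  refine subset_antisymm ?_ ?_
  · rintro x ⟨t, ht, hx⟩
    choose v hv using fun i => QuotientAddGroup.mk_surjective (x i)
    obtain ⟨k, hk⟩ : ∃ k : ℤ, k • (1 : ℝ) = ((↑) ∘ a : Fin n → ℝ) ⬝ᵥ v - t := by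
      rw [← AddCircle.coe_eq_zero_iff, AddCircle.coe_sub, ← theta_coe, sub_eq_zero]
      exact (congrArg (theta a) (funext hv)).trans hx.symm
    rw [zsmul_one] at hk
    refine ⟨v - (k : ℝ) • ((↑) ∘ u), ?_, funext fun i => ?_⟩
    · rwa [mem_ofPred_eq, dotProduct_sub, dotProduct_smul, intCast_dotProduct_eq_one hu,
        smul_eq_mul, mul_one, hk, sub_sub_cancel]
    · rw [← hv i]
      dsimp only
      rw [Pi.sub_apply, Pi.smul_apply, AddCircle.coe_sub, sub_eq_self, AddCircle.coe_eq_zero_iff]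
      exact ⟨k * u i, by simp⟩
  · rintro _ ⟨v, hv, rfl⟩
    exact ⟨_, hv, (theta_coe a v).symm⟩

theorem isConnected_preimage_theta_image_coe {n : ℕ} {a u : Fin n → ℤ} (hu : a ⬝ᵥ u = 1)
    {I : Set ℝ} (hI : Convex ℝ I) (hne : I.Nonempty) :
    IsConnected (theta a ⁻¹' ((↑) '' I)) := by
  rw [preimage_theta_image_coe hu]
  obtain ⟨t, ht⟩ := hne
  have hsec : ((↑) ∘ a : Fin n → ℝ) ⬝ᵥ (t • ((↑) ∘ u)) = t := by
    rw [dotProduct_smul, intCast_dotProduct_eq_one hu, smul_eq_mul, mul_one]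
  refine IsConnected.image ⟨⟨_, (mem_ofPred_eq ▸ hsec.symm ▸ ht)⟩, ?_⟩ _ ?_
  · exact (hI.is_linear_preimage
      ⟨dotProduct_add _, fun c v => dotProduct_smul c _ v⟩).isPreconnected
  · exact (continuous_pi fun i => continuous_quot_mk.comp (continuous_apply i)).continuousOn

/-- The complement of an arrangement of `m ≥ 1` pairwise parallel simple hyperplanes
`Hᵢ = θ_a⁻¹(bᵢ)` (with `gcd(a₁,…,aₙ) = 1` and pairwise distinct intercepts `bᵢ`)
has exactly `m` connected components. -/
theorem card_regions_parallel_arrangement {n m : ℕ} (hm : 1 ≤ m)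
    (a : Fin n → ℤ) (hgcd : Finset.univ.gcd a = 1)
    (b : Fin m → AddCircle (1 : ℝ)) (hb : Function.Injective b) :
    Nat.card ↥(comps (Set.univ \ ⋃ i, Hyp a (b i))) = m := by
  classical
  obtain ⟨u, hu⟩ := Finset.univ.gcd_eq_sum_mul a
  rw [hgcd] at hu
  set s := Finset.univ.image b
  have hs : s.card = m := by
    rw [Finset.card_image_of_injective _ hb, Finset.card_univ, Fintype.card_fin]
  have hs_ne : s.Nonempty := (Finset.univ_nonempty_iff.2 ⟨⟨0, hm⟩⟩).image b
  obtain ⟨x, y, hxy, hdisj, hunion⟩ := AddCircle.exists_disjoint_arcs_iUnion_eq_compl s hs_ne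
  have hcompl : univ \ ⋃ i, Hyp a (b i) = ⋃ i, theta a ⁻¹' ((↑) '' Ioo (x i) (y i)) := by
    rw [← preimage_iUnion, hunion]
    ext
    simp [Hyp, s, eq_comm]
  rw [hcompl, card_comps_iUnion (fun i => ?_) (fun i => ?_) (fun i j hij => (hdisj hij).preimage _),
    Nat.card_eq_fintype_card, Fintype.card_fin, hs]
  · exact (continuous_theta a).isOpen_preimage _ (QuotientAddGroup.isOpenMap_coe _ isOpen_Ioo)
  · exact isConnected_preimage_theta_image_coe hu.symm (convex_Ioo _ _) (nonempty_Ioo.2 (hxy i))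
end
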